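/- Let m ≥ k ≥ 5 be integers and let n satisfy C(m, k−2) − (m−k+1)·A(m, 4, k−3) ≤ n ≤ C(m, k−2). If the remainder of C(m, k−2) − n upon division by m−k+1 is strictly less than (m−k+1)/2, then N(n, k, m) = n(k−2) − ⌊2(C(m, k−2) − n)/(m−k+1)⌋. -/

import Mathlib

/-!
Lower bound: count pairs `(i, V)` with `V` a `(k-1)`-set of servers containing `X i`. By Hall,
each `V` contains at most `k - 1` of the `X i`, so there are at most
`(k-1)·C(m,k-1) = (t+1)·C(m,k-2)` pairs, where `t = m - k + 1`. An item stored on `c` servers lies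
in `C(m-c, k-1-c)` such sets, and this convex function of `c` lies above the line
`(t+1)(1 + t(k-2-c)/2)` through its values at `c = k-2` and `c = k-3`. Summing over the items
gives `t((k-2)n - N) ≤ 2(C(m,k-2) - n)`.

Upper bound: with `a = ⌊(C(m,k-2) - n)/t⌋`, store `a` words of an optimal code for
`A(m, 4, k-3)` twice each, and `n - 2a` of the `(k-2)`-sets containing no chosen word once.
Any two of these sets have a union of size at least `k - 1`, so inside a `(k-1)`-set `U` their
complements in `U` are disjoint, and inside a smaller `U` at most one of them fits: Hall holds.
The remainder condition makes the two bounds meet at `n(k-2) - 2a`.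
-/

/-- `Nmin n k m`: minimum total storage over all (n,N,k,m)-combinatorial batch codes. -/
noncomputable def Nmin (n k m : ℕ) : ℕ :=
  sInf {N : ℕ | ∃ X : Fin n → Finset (Fin m),
    (∑ t, (X t).card) = N ∧
    ∀ J : Finset (Fin n), 1 ≤ J.card → J.card ≤ k → J.card ≤ (J.biUnion X).card}

/-- `maxCW m d w` = `A(m, d, w)`: maximum size of a family of distinct `w`-subsets of an
`m`-set with pairwise symmetric differences of cardinality at least `d`. -/
noncomputable def maxCW (m d w : ℕ) : ℕ :=
  sSup {s : ℕ | ∃ F : Finset (Finset (Fin m)), F.card = s ∧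
    (∀ C ∈ F, C.card = w) ∧
    ∀ C ∈ F, ∀ D ∈ F, C ≠ D → d ≤ (symmDiff C D).card}

open Finset

def IsBatchCode {ι α : Type*} [DecidableEq α] (k : ℕ) (X : ι → Finset α) : Prop :=
  ∀ J : Finset ι, 1 ≤ #J → #J ≤ k → #J ≤ #(J.biUnion X)

section BatchCode

variable {ι α : Type*} [DecidableEq α] {k : ℕ} {X : ι → Finset α}

theorem isBatchCode_const_univ [Fintype α] (hk : k ≤ Fintype.card α) :
    IsBatchCode k fun _ : ι => (univ : Finset α) := by
  intro J hJ1 hJk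
  obtain ⟨j, hj⟩ := card_pos.1 hJ1
  have := card_le_card (subset_biUnion_of_mem (fun _ => (univ : Finset α)) hj)
  rw [card_univ] at this
  omega

variable [Fintype ι]

theorem isBatchCode_iff :
    IsBatchCode k X ↔ ∀ U : Finset α, #U < k → #{i | X i ⊆ U} ≤ #U := by
  constructor
  · intro hX U hU
    by_contra! hcount
    obtain ⟨J, hJU, hJ⟩ := exists_subset_card_eq hcount
    have hsub : J.biUnion X ⊆ U := biUnion_subset.2 fun j hj => (mem_filter.1 (hJU hj)).2
    have := hX J (by omega) (by omega)
    have := card_le_card hsub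
    omega
  · intro h J hJ1 hJk
    by_cases hbig : k ≤ #(J.biUnion X)
    · omega
    · calc #J ≤ #{i | X i ⊆ J.biUnion X} :=
            card_le_card fun j hj => mem_filter.2 ⟨mem_univ j, subset_biUnion_of_mem X hj⟩
        _ ≤ #(J.biUnion X) := h _ (by omega)

theorem IsBatchCode.comp_equiv {κ : Type*} [Fintype κ] (hX : IsBatchCode k X) (e : κ ≃ ι) :
    IsBatchCode k (X ∘ e) := by
  rw [isBatchCode_iff] at hX ⊢
  intro U hU
  have : #{j | (X ∘ e) j ⊆ U} = #{i | X i ⊆ U} := by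
    simp only [card_filter]
    exact Fintype.sum_equiv e _ _ fun _ => rfl
  exact this ▸ hX U hU

variable [Fintype α]

theorem IsBatchCode.sum_card_supersets_le (hX : IsBatchCode k X) (hk : 1 ≤ k) :
    ∑ i, #{V ∈ powersetCard (k - 1) univ | X i ⊆ V}
      ≤ (k - 1) * (Fintype.card α).choose (k - 1) := by
  calc ∑ i, #{V ∈ powersetCard (k - 1) univ | X i ⊆ V}
      = ∑ V ∈ powersetCard (k - 1) univ, #{i | X i ⊆ V} := by
        simp only [card_filter]
        exact sum_comm
    _ ≤ ∑ V ∈ powersetCard (k - 1) (univ : Finset α), (k - 1) := sum_le_sum fun V hV => by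
        have hV := (mem_powersetCard.1 hV).2
        exact hV ▸ isBatchCode_iff.1 hX V (by omega)
    _ = (k - 1) * (Fintype.card α).choose (k - 1) := by
        rw [sum_const, card_powersetCard, card_univ, smul_eq_mul, mul_comm]

end BatchCode

theorem Nat.choose_le_choose_add_add (a b d : ℕ) : a.choose b ≤ (a + d).choose (b + d) := by
  induction d with
  | zero => rfl
  | succ d ih =>
    rw [← add_assoc, ← add_assoc, Nat.choose_succ_succ']
    omega

theorem Nat.succ_mul_two_add_mul_le_two_mul_choose (t d : ℕ) :
    (t + 1) * (2 + t * d) ≤ 2 * (t + 1 + d).choose (d + 1) := by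
  induction d with
  | zero => simp [mul_comm]
  | succ d ih =>
    have hpascal : (t + 1 + (d + 1)).choose (d + 1 + 1)
        = (t + 1 + d).choose (d + 1) + (t + 1 + d).choose (2 + d) := by
      rw [← add_assoc, Nat.choose_succ_succ', add_comm d 2]
    have hmono := Nat.choose_le_choose_add_add (t + 1) 2 d
    have htwo : (t + 1) * t = (t + 1).choose 2 * 2 := by
      simpa using Nat.add_one_mul_choose_eq t 1
    rw [hpascal]
    nlinarith

theorem Finset.two_mul_card_union {α : Type*} [DecidableEq α] (C D : Finset α) :
    2 * #(C ∪ D) = #C + #D + #(symmDiff C D) := by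
  have hsymm : #(symmDiff C D) = #(C ∪ D) - #(C ∩ D) := by
    rw [symmDiff_eq_sup_sdiff_inf]
    exact card_sdiff_of_subset inter_subset_union
  have := card_union_add_card_inter C D
  have := card_le_card (inter_subset_union : C ∩ D ⊆ C ∪ D)
  omega

section Supersets

variable {α : Type*} [Fintype α] [DecidableEq α] {w : ℕ}

theorem card_filter_powersetCard_succ_subset {C : Finset α} (hC : #C = w) :
    #{S ∈ powersetCard (w + 1) univ | C ⊆ S} = Fintype.card α - w := by
  rw [card_filter_powersetCard_subset C univ _ (subset_univ C) (by omega), card_univ, hC,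
    Nat.add_sub_cancel_left, Nat.choose_one_right]

theorem card_mul_le_choose_of_card_union {F : Finset (Finset α)} (hF : ∀ C ∈ F, #C = w)
    (hFu : ∀ C ∈ F, ∀ D ∈ F, C ≠ D → w + 2 ≤ #(C ∪ D)) :
    #F * (Fintype.card α - w) ≤ (Fintype.card α).choose (w + 1) := by
  have hdisj : (F : Set (Finset α)).PairwiseDisjoint
      fun C => {S ∈ powersetCard (w + 1) (univ : Finset α) | C ⊆ S} := by
    intro C hC D hD hCD
    refine disjoint_left.2 fun S hSC hSD => ?_
    rw [mem_filter, mem_powersetCard] at hSC hSD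
    have := card_le_card (union_subset hSC.2 hSD.2)
    have := hFu C hC D hD hCD
    omega
  calc #F * (Fintype.card α - w) = ∑ C ∈ F, #{S ∈ powersetCard (w + 1) univ | C ⊆ S} := by
        rw [sum_congr rfl fun C hC => card_filter_powersetCard_succ_subset (hF C hC), sum_const,
          smul_eq_mul]
    _ = #(F.biUnion fun C => {S ∈ powersetCard (w + 1) (univ : Finset α) | C ⊆ S}) :=
        (card_biUnion hdisj).symm
    _ ≤ #(powersetCard (w + 1) (univ : Finset α)) :=
        card_le_card (biUnion_subset.2 fun _ _ => filter_subset _ _)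
    _ = (Fintype.card α).choose (w + 1) := by rw [card_powersetCard, card_univ]

theorem choose_le_card_filter_not_subset_add {F : Finset (Finset α)} (hF : ∀ C ∈ F, #C = w) :
    (Fintype.card α).choose (w + 1)
      ≤ #{S ∈ powersetCard (w + 1) univ | ∀ C ∈ F, ¬C ⊆ S} + #F * (Fintype.card α - w) := by
  have hcover : powersetCard (w + 1) (univ : Finset α)
      ⊆ {S ∈ powersetCard (w + 1) (univ : Finset α) | ∀ C ∈ F, ¬C ⊆ S}
        ∪ F.biUnion fun C => {S ∈ powersetCard (w + 1) (univ : Finset α) | C ⊆ S} := by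
    intro S hS
    by_cases h : ∃ C ∈ F, C ⊆ S
    · obtain ⟨C, hC, hCS⟩ := h
      exact mem_union_right _ (mem_biUnion.2 ⟨C, hC, mem_filter.2 ⟨hS, hCS⟩⟩)
    · exact mem_union_left _ (mem_filter.2 ⟨hS, fun C hC hCS => h ⟨C, hC, hCS⟩⟩)
  calc (Fintype.card α).choose (w + 1) = #(powersetCard (w + 1) (univ : Finset α)) := by
        rw [card_powersetCard, card_univ]
    _ ≤ _ := card_le_card hcover
    _ ≤ _ := card_union_le _ _
    _ ≤ _ := Nat.add_le_add_left card_biUnion_le _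
    _ = _ := by
        rw [sum_congr rfl fun C hC => card_filter_powersetCard_succ_subset (hF C hC), sum_const,
          smul_eq_mul]

theorem succ_mul_two_add_mul_le_two_mul_card_supersets {t k : ℕ}
    (hα : Fintype.card α = t + k - 1) (hk : 2 ≤ k) (s : Finset α) :
    ((t : ℤ) + 1) * (2 + t * ((k : ℤ) - 2 - #s))
      ≤ 2 * #{V ∈ powersetCard (k - 1) univ | s ⊆ V} := by
  have hs : #s ≤ t + k - 1 := hα ▸ card_le_univ s
  rcases le_or_gt #s (k - 2) with hle | hgt
  · obtain ⟨d, hd⟩ : ∃ d, k - 2 = #s + d := ⟨k - 2 - #s, by omega⟩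
    have hcount : #{V ∈ powersetCard (k - 1) univ | s ⊆ V} = (t + 1 + d).choose (d + 1) := by
      rw [card_filter_powersetCard_subset s univ _ (subset_univ s) (by omega), card_univ, hα]
      congr 1 <;> omega
    have hd' : (k : ℤ) - 2 - #s = d := by omega
    rw [hcount, hd']
    exact_mod_cast Nat.succ_mul_two_add_mul_le_two_mul_choose t d
  have hcount : (0 : ℤ) ≤ #{V ∈ powersetCard (k - 1) univ | s ⊆ V} := by positivity
  rcases (show k - 1 ≤ #s by omega).eq_or_lt with heq | hlt
  · have hmem : s ∈ ({V ∈ powersetCard (k - 1) univ | s ⊆ V} : Finset (Finset α)) :=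
      mem_filter.2 ⟨mem_powersetCard.2 ⟨subset_univ s, heq.symm⟩, subset_refl s⟩
    have hone : (1 : ℤ) ≤ #{V ∈ powersetCard (k - 1) univ | s ⊆ V} := by
      exact_mod_cast card_pos.2 ⟨s, hmem⟩
    have hc : (k : ℤ) - 2 - #s = -1 := by omega
    have htt : (t : ℤ) ≤ t * t := by exact_mod_cast Nat.le_mul_self t
    rw [hc]
    nlinarith
  · -- a set of size at least `k` exists only if `t ≥ 1`
    have ht : (1 : ℤ) ≤ t := by omega
    have hc : (k : ℤ) - 2 - #s ≤ -2 := by omega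
    have hneg : 2 + t * ((k : ℤ) - 2 - #s) ≤ 0 := by nlinarith
    nlinarith

end Supersets

theorem IsBatchCode.mul_sub_sum_card_le {ι α : Type*} [Fintype ι] [Fintype α] [DecidableEq α]
    {k t : ℕ} {X : ι → Finset α} (hX : IsBatchCode k X) (hk : 2 ≤ k)
    (hα : Fintype.card α = t + k - 1) :
    (t : ℤ) * ((k - 2) * Fintype.card ι - ∑ i, (#(X i) : ℤ))
      ≤ 2 * ((Fintype.card α).choose (k - 2) - Fintype.card ι) := by
  have hpointwise := sum_le_sum fun i (_ : i ∈ univ) =>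
    succ_mul_two_add_mul_le_two_mul_card_supersets hα hk (X i)
  have hcount : ∑ i, #{V ∈ powersetCard (k - 1) univ | X i ⊆ V}
      ≤ (t + 1) * (Fintype.card α).choose (k - 2) := by
    have hid := Nat.choose_succ_right_eq (Fintype.card α) (k - 2)
    rw [show k - 2 + 1 = k - 1 by omega, show Fintype.card α - (k - 2) = t + 1 by omega] at hid
    rw [mul_comm, ← hid, mul_comm]
    exact hX.sum_card_supersets_le (by omega)
  have hcount' : ∑ i, (#{V ∈ powersetCard (k - 1) univ | X i ⊆ V} : ℤ)
      ≤ (t + 1) * (Fintype.card α).choose (k - 2) := by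
    exact_mod_cast hcount
  rw [← mul_sum, sum_add_distrib, ← mul_sum, sum_sub_distrib, sum_const, sum_const, ← mul_sum]
    at hpointwise
  simp only [card_univ, nsmul_eq_mul] at hpointwise
  have hdiv : ((t : ℤ) + 1)
        * (Fintype.card ι * 2 + t * (Fintype.card ι * (k - 2) - ∑ i, (#(X i) : ℤ)))
      ≤ ((t : ℤ) + 1) * (2 * (Fintype.card α).choose (k - 2)) := by linarith
  have := le_of_mul_le_mul_left hdiv (by positivity)
  linarith

theorem sum_filter_subset_le_card {α : Type*} [DecidableEq α] {𝒳 : Finset (Finset α)} {r : ℕ}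
    (h_half : ∀ X ∈ 𝒳, r ≤ 2 * #X) (h_union : ∀ X ∈ 𝒳, ∀ Y ∈ 𝒳, X ≠ Y → r ≤ #(X ∪ Y))
    {U : Finset α} (hU : #U ≤ r) :
    ∑ X ∈ 𝒳 with X ⊆ U, (r - #X) ≤ #U := by
  have h_cover : ∀ X ∈ {X ∈ 𝒳 | X ⊆ U}, ∀ Y ∈ {X ∈ 𝒳 | X ⊆ U}, X ≠ Y →
      X ∪ Y = U ∧ #U = r := by
    intro X hX Y hY hXY
    rw [mem_filter] at hX hY
    have hsub := union_subset hX.2 hY.2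
    have := h_union X hX.1 Y hY.1 hXY
    have := card_le_card hsub
    exact ⟨eq_of_subset_of_card_le hsub (by omega), by omega⟩
  rcases hU.lt_or_eq with hlt | heq
  · have hone : #{X ∈ 𝒳 | X ⊆ U} ≤ 1 := card_le_one.2 fun X hX Y hY => by
      by_contra hXY
      exact hlt.ne (h_cover X hX Y hY hXY).2
    calc ∑ X ∈ 𝒳 with X ⊆ U, (r - #X) ≤ ∑ X ∈ 𝒳 with X ⊆ U, #U := sum_le_sum fun X hX => by
          rw [mem_filter] at hX
          have := h_half X hX.1
          have := card_le_card hX.2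
          omega
      _ = #{X ∈ 𝒳 | X ⊆ U} * #U := by rw [sum_const, smul_eq_mul]
      _ ≤ 1 * #U := Nat.mul_le_mul_right _ hone
      _ = #U := one_mul _
  · have hdisj : (({X ∈ 𝒳 | X ⊆ U} : Finset _) : Set (Finset α)).PairwiseDisjoint (U \ ·) := by
      intro X hX Y hY hXY
      refine disjoint_left.2 fun x hxX hxY => ?_
      rw [mem_sdiff] at hxX hxY
      rw [← (h_cover X hX Y hY hXY).1, mem_union] at hxX
      tauto
    calc ∑ X ∈ 𝒳 with X ⊆ U, (r - #X) = ∑ X ∈ 𝒳 with X ⊆ U, #(U \ X) :=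
          sum_congr rfl fun X hX => by rw [card_sdiff_of_subset (mem_filter.1 hX).2, heq]
      _ = #({X ∈ 𝒳 | X ⊆ U}.biUnion (U \ ·)) := (card_biUnion hdisj).symm
      _ ≤ #U := card_le_card (biUnion_subset.2 fun _ _ => sdiff_subset)

theorem Nmin_le {ι : Type*} [Fintype ι] {k m : ℕ} {X : ι → Finset (Fin m)}
    (hX : IsBatchCode k X) : Nmin (Fintype.card ι) k m ≤ ∑ i, #(X i) := by
  let e := Fintype.equivFin ι
  exact Nat.sInf_le ⟨X ∘ e.symm, e.symm.sum_comp fun i => #(X i), hX.comp_equiv e.symm⟩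

theorem mul_sub_Nmin_le {n k m : ℕ} (hk : 2 ≤ k) (hkm : k ≤ m) :
    ((m - k + 1 : ℕ) : ℤ) * ((k - 2) * n - Nmin n k m) ≤ 2 * (m.choose (k - 2) - n) := by
  have hne : {N : ℕ | ∃ X : Fin n → Finset (Fin m), ∑ i, #(X i) = N ∧ IsBatchCode k X}.Nonempty :=
    ⟨_, fun _ => univ, rfl, isBatchCode_const_univ (by simpa using hkm)⟩
  obtain ⟨X, hsum, hX⟩ := Nat.sInf_mem hne
  have hsum' : ∑ i, #(X i) = Nmin n k m := hsum
  have := hX.mul_sub_sum_card_le hk (t := m - k + 1) (by simp only [Fintype.card_fin]; omega)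
  simp only [Fintype.card_fin] at this
  rw [← hsum']
  exact_mod_cast this

theorem Nmin_le_of_pairwise_card_union {m r : ℕ} {𝒳 : Finset (Finset (Fin m))}
    (h_half : ∀ X ∈ 𝒳, r ≤ 2 * #X) (h_union : ∀ X ∈ 𝒳, ∀ Y ∈ 𝒳, X ≠ Y → r ≤ #(X ∪ Y)) :
    Nmin (∑ X ∈ 𝒳, (r - #X)) (r + 1) m ≤ ∑ X ∈ 𝒳, (r - #X) * #X := by
  have hX : IsBatchCode (r + 1) fun p : Σ X : 𝒳, Fin (r - #X.1) => p.1.1 := by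
    rw [isBatchCode_iff]
    intro U hU
    have hcount : #{p : Σ X : 𝒳, Fin (r - #X.1) | p.1.1 ⊆ U} = ∑ X ∈ 𝒳 with X ⊆ U, (r - #X) := by
      rw [card_filter, Fintype.sum_sigma, sum_filter, ← sum_coe_sort 𝒳]
      refine sum_congr rfl fun X _ => ?_
      split_ifs <;> simp
    rw [hcount]
    exact sum_filter_subset_le_card h_half h_union (by omega)
  simpa [Fintype.card_sigma, Fintype.sum_sigma, sum_attach 𝒳 fun X => r - #X,
    sum_attach 𝒳 fun X => (r - #X) * #X] using Nmin_le hX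

theorem Nmin_card_add_two_mul_card_le {k m : ℕ} (hk : 5 ≤ k) {G F : Finset (Finset (Fin m))}
    (hG : ∀ S ∈ G, #S = k - 2 ∧ ∀ C ∈ F, ¬C ⊆ S) (hF : ∀ C ∈ F, #C = k - 3)
    (hFu : ∀ C ∈ F, ∀ D ∈ F, C ≠ D → k - 1 ≤ #(C ∪ D)) :
    Nmin (#G + 2 * #F) k m ≤ #G * (k - 2) + 2 * #F * (k - 3) := by
  have hdisj : Disjoint G F := disjoint_left.2 fun S hSG hSF => by
    have := (hG S hSG).1
    have := hF S hSF
    omega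
  have hG_union : ∀ S ∈ G, ∀ Y ∈ G ∪ F, S ≠ Y → k - 1 ≤ #(S ∪ Y) := by
    intro S hS Y hY hSY
    have hYS : ¬Y ⊆ S := by
      rcases mem_union.1 hY with hYG | hYF
      · exact fun h => hSY (eq_of_subset_of_card_le h (by rw [(hG S hS).1, (hG Y hYG).1])).symm
      · exact (hG S hS).2 Y hYF
    have : #S < #(S ∪ Y) := card_lt_card (left_lt_sup.2 hYS)
    rw [(hG S hS).1] at this
    omega
  have h_half : ∀ X ∈ G ∪ F, k - 1 ≤ 2 * #X := fun X hX => by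
    rcases mem_union.1 hX with hXG | hXF
    · rw [(hG X hXG).1]; omega
    · rw [hF X hXF]; omega
  have h_union : ∀ X ∈ G ∪ F, ∀ Y ∈ G ∪ F, X ≠ Y → k - 1 ≤ #(X ∪ Y) := by
    intro X hX Y hY hXY
    rcases mem_union.1 hX with hXG | hXF
    · exact hG_union X hXG Y hY hXY
    rcases mem_union.1 hY with hYG | hYF
    · exact union_comm X Y ▸ hG_union Y hYG X hX hXY.symm
    · exact hFu X hXF Y hYF hXY
  have hbound := Nmin_le_of_pairwise_card_union h_half h_union
  rw [sum_union hdisj, sum_union hdisj,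
    sum_congr rfl fun S hS => show k - 1 - #S = 1 by rw [(hG S hS).1]; omega,
    sum_congr rfl fun S hS => show (k - 1 - #S) * #S = k - 2 by
      rw [(hG S hS).1, show k - 1 - (k - 2) = 1 by omega, one_mul],
    sum_congr rfl fun C hC => show k - 1 - #C = 2 by rw [hF C hC]; omega,
    sum_congr rfl fun C hC => show (k - 1 - #C) * #C = 2 * (k - 3) by
      rw [hF C hC, show k - 1 - (k - 3) = 2 by omega],
    sum_const, sum_const, sum_const, sum_const, show k - 1 + 1 = k by omega] at hbound
  simp only [smul_eq_mul, mul_one, mul_comm #F 2] at hbound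
  exact hbound.trans_eq (by ring)

theorem Nmin_le_of_code {n k m : ℕ} (hk : 5 ≤ k) (hkm : k ≤ m) {F : Finset (Finset (Fin m))}
    (hF : ∀ C ∈ F, #C = k - 3) (hFu : ∀ C ∈ F, ∀ D ∈ F, C ≠ D → k - 1 ≤ #(C ∪ D))
    (h2F : 2 * #F ≤ n) (hn : n + (m - k + 1) * #F ≤ m.choose (k - 2)) :
    Nmin n k m ≤ n * (k - 2) - 2 * #F := by
  have hcover := choose_le_card_filter_not_subset_add hF
  rw [Fintype.card_fin, show k - 3 + 1 = k - 2 by omega,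
    show m - (k - 3) = m - k + 1 + 2 by omega, mul_add, mul_comm] at hcover
  obtain ⟨G, hGsub, hGcard⟩ := exists_subset_card_eq
    (show n - 2 * #F ≤ #{S ∈ powersetCard (k - 2) univ | ∀ C ∈ F, ¬C ⊆ S} by omega)
  have hG : ∀ S ∈ G, #S = k - 2 ∧ ∀ C ∈ F, ¬C ⊆ S := fun S hS => by
    have := hGsub hS
    rw [mem_filter, mem_powersetCard] at this
    exact ⟨this.1.2, this.2⟩
  have hbound := Nmin_card_add_two_mul_card_le hk hG hF hFu
  have hcard : #G + 2 * #F = n := by omega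
  have hsize : #G * (k - 2) + 2 * #F * (k - 3) = n * (k - 2) - 2 * #F := by
    obtain ⟨g, rfl⟩ : ∃ g, n = 2 * #F + g := ⟨n - 2 * #F, by omega⟩
    obtain ⟨j, rfl⟩ : ∃ j, k = j + 3 := ⟨k - 3, by omega⟩
    rw [hGcard, Nat.add_sub_cancel_left, show j + 3 - 2 = j + 1 by omega, Nat.add_sub_cancel]
    exact (Nat.sub_eq_of_eq_add (by ring)).symm
  rwa [hcard, hsize] at hbound

theorem exists_card_eq_maxCW (m d w : ℕ) :
    ∃ F : Finset (Finset (Fin m)), #F = maxCW m d w ∧ (∀ C ∈ F, #C = w) ∧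
      ∀ C ∈ F, ∀ D ∈ F, C ≠ D → d ≤ #(symmDiff C D) := by
  apply Nat.sSup_mem (s := {s : ℕ | ∃ F : Finset (Finset (Fin m)), #F = s ∧
    (∀ C ∈ F, #C = w) ∧ ∀ C ∈ F, ∀ D ∈ F, C ≠ D → d ≤ #(symmDiff C D)}) ⟨0, ∅, by simp⟩
  refine ⟨2 ^ m, ?_⟩
  rintro s ⟨F, rfl, -, -⟩
  calc #F ≤ Fintype.card (Finset (Fin m)) := card_le_univ F
    _ = 2 ^ m := by simp

theorem exists_subcode_card_eq_div {n k m : ℕ} (hk : 3 ≤ k) (hkm : k ≤ m)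
    (hn1 : m.choose (k - 2) - (m - k + 1) * maxCW m 4 (k - 3) ≤ n)
    (hn2 : n ≤ m.choose (k - 2)) :
    ∃ F : Finset (Finset (Fin m)), #F = (m.choose (k - 2) - n) / (m - k + 1) ∧
      (∀ C ∈ F, #C = k - 3) ∧ (∀ C ∈ F, ∀ D ∈ F, C ≠ D → k - 1 ≤ #(C ∪ D)) ∧
      2 * #F ≤ n ∧ n + (m - k + 1) * #F ≤ m.choose (k - 2) := by
  obtain ⟨F, hFcard, hF, hFd⟩ := exists_card_eq_maxCW m 4 (k - 3)
  have hFu : ∀ C ∈ F, ∀ D ∈ F, C ≠ D → k - 3 + 2 ≤ #(C ∪ D) := fun C hC D hD hCD => by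
    have := two_mul_card_union C D
    have := hFd C hC D hD hCD
    rw [hF C hC, hF D hD] at *
    omega
  have hpack := card_mul_le_choose_of_card_union hF hFu
  rw [Fintype.card_fin, show k - 3 + 1 = k - 2 by omega,
    show m - (k - 3) = m - k + 1 + 2 by omega, mul_add, mul_comm] at hpack
  rw [← hFcard] at hn1
  have hq : (m.choose (k - 2) - n) / (m - k + 1) ≤ #F := Nat.div_le_of_le_mul (by omega)
  obtain ⟨F', hF'F, hF'card⟩ := exists_subset_card_eq hq
  have := Nat.mul_div_le (m.choose (k - 2) - n) (m - k + 1)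
  refine ⟨F', hF'card, fun C hC => hF C (hF'F hC), fun C hC D hD hCD => ?_, by omega, by
    rw [hF'card]; omega⟩
  have := hFu C (hF'F hC) D (hF'F hD) hCD
  omega

theorem floor_two_mul_div_eq {q t : ℕ} (h : 2 * (q % t) < t) :
    ⌊(2 * q : ℚ) / t⌋ = 2 * (q / t : ℕ) := by
  have hq := Nat.div_add_mod q t
  have hdiv : 2 * q / t = 2 * (q / t) := Nat.div_eq_of_lt_le
    (by rw [mul_assoc, mul_comm (q / t) t]; omega)
    (by rw [add_mul, mul_assoc, mul_comm (q / t) t]; omega)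
  rw [show (2 * q : ℚ) = ((2 * q : ℕ) : ℚ) by push_cast; ring, Rat.floor_natCast_div_natCast]
  exact_mod_cast hdiv

theorem le_two_mul_div_of_mul_le {x : ℤ} {q t : ℕ} (h : 2 * (q % t) < t)
    (hx : t * x ≤ 2 * q) : x ≤ 2 * (q / t : ℕ) := by
  have hq : ((t * (q / t) + q % t : ℕ) : ℤ) = q := by exact_mod_cast Nat.div_add_mod q t
  have h' : ((2 * (q % t) : ℕ) : ℤ) < t := by exact_mod_cast h
  push_cast at hq h' ⊢
  by_contra! hlt
  nlinarith

/-- For `m ≥ k ≥ 5` and `C(m,k-2) - (m-k+1)·A(m,4,k-3) ≤ n ≤ C(m,k-2)`, if the remainder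
of `C(m,k-2) - n` modulo `m-k+1` is strictly less than `(m-k+1)/2`, then
`N(n,k,m) = n(k-2) - ⌊2(C(m,k-2) - n)/(m-k+1)⌋`. -/
theorem Nmin_cw_optimal (n k m : ℕ) (hk : 5 ≤ k) (hkm : k ≤ m)
    (hn1 : Nat.choose m (k - 2) - (m - k + 1) * maxCW m 4 (k - 3) ≤ n)
    (hn2 : n ≤ Nat.choose m (k - 2))
    (hrem : (((Nat.choose m (k - 2) - n) % (m - k + 1) : ℕ) : ℚ)
        < ((m : ℚ) - k + 1) / 2) :
    (Nmin n k m : ℤ) = (n : ℤ) * (k - 2)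
      - ⌊2 * ((Nat.choose m (k - 2) : ℚ) - n) / ((m : ℚ) - k + 1)⌋ := by
  have ht : ((m - k + 1 : ℕ) : ℚ) = (m : ℚ) - k + 1 := by push_cast [Nat.cast_sub hkm]; ring
  have hr : 2 * ((m.choose (k - 2) - n) % (m - k + 1)) < m - k + 1 := by
    rw [← ht] at hrem
    have : ((2 * ((m.choose (k - 2) - n) % (m - k + 1)) : ℕ) : ℚ) < (m - k + 1 : ℕ) := by
      push_cast at hrem ⊢
      linarith
    exact_mod_cast this
  obtain ⟨F, hFcard, hF, hFu, h2F, hnF⟩ := exists_subcode_card_eq_div (by omega) hkm hn1 hn2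
  have hupper := Nmin_le_of_code hk hkm hF hFu h2F hnF
  have hlower := le_two_mul_div_of_mul_le hr (x := (k - 2) * n - Nmin n k m) (by
    rw [Nat.cast_sub hn2]
    exact mul_sub_Nmin_le (by omega) hkm)
  rw [← ht, ← Nat.cast_sub hn2, floor_two_mul_div_eq hr, ← hFcard]
  rw [← hFcard] at hlower
  have : 2 * #F ≤ n * (k - 2) := h2F.trans (Nat.le_mul_of_pos_right n (by omega))
  zify [this, show 2 ≤ k by omega] at hupper
  linarith
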